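/- Let n ≥ 3 and let A be a primitive (0,1) companion matrix of order n with zero trace, with distinct elementary cycle lengths ℓ_1 < ... < ℓ_z in D(A). If the interval [2, m(V_1)+1] is contained in V_1 = {i : a_{n,i} = 0}, then exp(A) = n + F(ℓ_1,...,ℓ_z) + m(V_1). -/

import Mathlib

open Matrix BigOperators

/-- A nonnegative square matrix is primitive if some positive power has all entries positive. -/
def IsPrimitive {n : ℕ} (A : Matrix (Fin n) (Fin n) ℝ) : Prop :=
  ∃ m : ℕ, 0 < m ∧ ∀ i j, 0 < (A ^ m) i j

/-- The exponent of a primitive matrix: the least positive `m` with `A ^ m > 0`. -/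
noncomputable def matExp {n : ℕ} (A : Matrix (Fin n) (Fin n) ℝ) : ℕ :=
  sInf {m : ℕ | 0 < m ∧ ∀ i j, 0 < (A ^ m) i j}

/-- `(0,1)` companion matrix: superdiagonal ones on the first `n-1` rows,
arbitrary `(0,1)` last row, all other entries zero. -/
def IsCompanion {n : ℕ} (A : Matrix (Fin n) (Fin n) ℝ) : Prop :=
  (∀ i j, A i j = 0 ∨ A i j = 1) ∧
  (∀ i j : Fin n, (i : ℕ) + 1 < n → (A i j = 1 ↔ (j : ℕ) = (i : ℕ) + 1))

/-- `exp(A:i,j)`: least positive `k` such that `(A^l) i j > 0` for all `l ≥ k`. -/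
noncomputable def expIJ {n : ℕ} (A : Matrix (Fin n) (Fin n) ℝ) (i j : Fin n) : ℕ :=
  sInf {k : ℕ | 0 < k ∧ ∀ l, k ≤ l → 0 < (A ^ l) i j}

/-- `exp(A:i)`: least positive `p` such that every entry of row `i` of `A ^ p` is positive. -/
noncomputable def expRow {n : ℕ} (A : Matrix (Fin n) (Fin n) ℝ) (i : Fin n) : ℕ :=
  sInf {p : ℕ | 0 < p ∧ ∀ j, 0 < (A ^ p) i j}

/-- The digraph of `A` has an elementary cycle of length `k`. -/
def HasElemCycle {n : ℕ} (A : Matrix (Fin n) (Fin n) ℝ) (k : ℕ) : Prop :=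
  0 < k ∧ ∃ c : ℕ → Fin n, c k = c 0 ∧
    (∀ i j, i < k → j < k → c i = c j → i = j) ∧
    ∀ i < k, A (c i) (c (i + 1)) = 1

/-- `m(U)`: the maximal length of a run of consecutive integers contained in `U`. -/
noncomputable def runMax (U : Set ℕ) : ℕ :=
  sSup {k : ℕ | ∃ a : ℕ, ∀ t < k, a + t ∈ U}

/-- The Frobenius number of a set `L`: the least `N` such that every `m ≥ N` is a
nonnegative integer combination of elements of `L`. -/
noncomputable def frobNum (L : Set ℕ) : ℕ :=
  sInf {N : ℕ | ∀ m, N ≤ m → m ∈ AddSubmonoid.closure L}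

/-- Irreducibility: for all `i j` there is a walk of some positive length from `i` to `j`. -/
def IsIrreducibleMat {n : ℕ} (A : Matrix (Fin n) (Fin n) ℝ) : Prop :=
  ∀ i j, ∃ k : ℕ, 0 < k ∧ 0 < (A ^ k) i j

/-!
Walks in the digraph of a companion matrix are deterministic (`i → i + 1`) except at the last
vertex `N`, which steps to the columns `c` with `A N c = 1`; each such `c` closes exactly one
elementary cycle, of length `n - c`. Hence the closed walks at `N` have exactly the lengths in the
numerical semigroup generated by the cycle lengths, and a walk of length `l ≥ 1` from `N` to `j`
is a closed walk followed by `N → c → c + 1 → ⋯ → j`. Every `j` lies at distance at most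
`m = m(V₁)` above some `c` with `A N c = 1`, which makes `A ^ (n + F + m)` positive. Conversely,
if `1, …, m` all lie in `V₁`, a walk from `0` to `m` of length `n + F + m - 1` would have to end
in `N → 0 → ⋯ → m` after a closed walk of length `F - 1`, which does not exist.
-/

namespace Matrix

variable {ι κ μ R : Type*} [Semiring R] [LinearOrder R] [IsStrictOrderedRing R]

theorem mul_apply_pos_iff_of_nonneg [Fintype κ] {B : Matrix ι κ R} {C : Matrix κ μ R}
    (hB : ∀ i j, 0 ≤ B i j) (hC : ∀ i j, 0 ≤ C i j) {i : ι} {k : μ} :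
    0 < (B * C) i k ↔ ∃ j, 0 < B i j ∧ 0 < C j k := by
  rw [mul_apply, Finset.sum_pos_iff_of_nonneg fun j _ => mul_nonneg (hB i j) (hC j k)]
  simp only [Finset.mem_univ, true_and]
  refine exists_congr fun j => ⟨fun h => ⟨(hB i j).lt_of_ne ?_, (hC j k).lt_of_ne ?_⟩,
    fun h => mul_pos h.1 h.2⟩
  · rintro hz; simp [← hz] at h
  · rintro hz; simp [← hz] at h

theorem one_apply_pos_iff [DecidableEq ι] {i j : ι} : 0 < (1 : Matrix ι ι R) i j ↔ i = j := by
  by_cases h : i = j <;> simp [one_apply, h]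

variable [Fintype ι] [DecidableEq ι] {A : Matrix ι ι R}

theorem pow_add_apply_pos_iff (hA : ∀ i j, 0 ≤ A i j) {a b : ℕ} {i j : ι} :
    0 < (A ^ (a + b)) i j ↔ ∃ t, 0 < (A ^ a) i t ∧ 0 < (A ^ b) t j := by
  rw [pow_add]
  exact mul_apply_pos_iff_of_nonneg (pow_apply_nonneg hA a) (pow_apply_nonneg hA b)

theorem pow_succ_apply_pos_iff (hA : ∀ i j, 0 ≤ A i j) {k : ℕ} {i j : ι} :
    0 < (A ^ (k + 1)) i j ↔ ∃ t, 0 < A i t ∧ 0 < (A ^ k) t j := by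
  rw [pow_succ']
  exact mul_apply_pos_iff_of_nonneg hA (pow_apply_nonneg hA k)

theorem pow_succ_pos_of_pos (hA : ∀ i j, 0 ≤ A i j) (hcol : ∀ j, ∃ i, 0 < A i j) {k : ℕ}
    (hk : ∀ i j, 0 < (A ^ k) i j) (i j : ι) : 0 < (A ^ (k + 1)) i j := by
  obtain ⟨t, ht⟩ := hcol j
  rw [pow_succ]
  exact (mul_apply_pos_iff_of_nonneg (pow_apply_nonneg hA k) hA).2 ⟨t, hk i t, ht⟩

theorem pow_pos_of_le (hA : ∀ i j, 0 ≤ A i j) (hcol : ∀ j, ∃ i, 0 < A i j) {k l : ℕ}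
    (hkl : k ≤ l) (hk : ∀ i j, 0 < (A ^ k) i j) : ∀ i j, 0 < (A ^ l) i j := by
  induction l, hkl using Nat.le_induction with
  | base => exact hk
  | succ l _ ih => exact pow_succ_pos_of_pos hA hcol ih

end Matrix

theorem matExp_eq_of_pos_of_not_pos {n : ℕ} {A : Matrix (Fin n) (Fin n) ℝ}
    (hA : ∀ i j, 0 ≤ A i j) (hcol : ∀ j, ∃ i, 0 < A i j) {T : ℕ} (hT : 0 < T)
    (hpos : ∀ i j, 0 < (A ^ T) i j) {i j : Fin n} (hzero : ¬ 0 < (A ^ (T - 1)) i j) :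
    matExp A = T := by
  refine le_antisymm (Nat.sInf_le ⟨hT, hpos⟩) (le_csInf ⟨T, hT, hpos⟩ ?_)
  rintro k ⟨hk, hkpos⟩
  by_contra! hkT
  exact hzero (pow_pos_of_le hA hcol (by omega) hkpos i j)

section RunMax

variable {U : Set ℕ}

theorem le_runMax (hU : BddAbove U) {a k : ℕ} (h : ∀ t < k, a + t ∈ U) : k ≤ runMax U := by
  obtain ⟨b, hb⟩ := hU
  refine le_csSup ⟨b + 1, ?_⟩ ⟨a, h⟩
  rintro k ⟨a, ha⟩
  rcases Nat.eq_zero_or_pos k with rfl | hk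
  · omega
  · have := hb (ha (k - 1) (by omega))
    omega

theorem runMax_le {a b : ℕ} (hU : U ⊆ Set.Ico a b) : runMax U ≤ b - a := by
  refine csSup_le ⟨0, 0, fun t ht => absurd ht (Nat.not_lt_zero t)⟩ ?_
  rintro k ⟨c, hc⟩
  rcases Nat.eq_zero_or_pos k with rfl | hk
  · omega
  · have h0 := hU (hc 0 hk)
    have hlast := hU (hc (k - 1) (by omega))
    simp only [Set.mem_Ico] at h0 hlast
    omega

theorem exists_le_notMem_sub_le_runMax (hU : BddAbove U) (h0 : 0 ∉ U) (j : ℕ) :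
    ∃ c ≤ j, c ∉ U ∧ j - c ≤ runMax U := by
  classical
  set c := Nat.findGreatest (· ∉ U) j
  refine ⟨c, Nat.findGreatest_le j, Nat.findGreatest_spec (P := (· ∉ U)) (Nat.zero_le j) h0,
    le_runMax hU (a := c + 1) fun t ht => ?_⟩
  by_contra hmem
  exact Nat.findGreatest_is_greatest (P := (· ∉ U)) (n := j) (k := c + 1 + t) (by omega)
    (by omega) hmem

end RunMax

section Frobenius

variable {L : Set ℕ}

theorem exists_forall_ge_mem_closure_of_succ_mem {m : ℕ} (hm : m ∈ AddSubmonoid.closure L)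
    (hm' : m + 1 ∈ AddSubmonoid.closure L) :
    ∃ N₀, ∀ k, N₀ ≤ k → k ∈ AddSubmonoid.closure L := by
  have hgcd : Nat.setGcd L ∣ 1 := by
    simpa using Nat.dvd_sub (Nat.setGcd_dvd_of_mem_closure hm') (Nat.setGcd_dvd_of_mem_closure hm)
  obtain ⟨N₀, hN₀⟩ := Nat.exists_mem_closure_of_ge (s := L)
  exact ⟨N₀, fun k hk => hN₀ k hk (hgcd.trans (one_dvd k))⟩

theorem one_notMem_closure (h : ∀ x ∈ L, 2 ≤ x) : 1 ∉ AddSubmonoid.closure L := by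
  suffices ∀ x ∈ AddSubmonoid.closure L, x ≠ 1 from fun h1 => this 1 h1 rfl
  intro x hx
  induction hx using AddSubmonoid.closure_induction with
  | mem x hx => have := h x hx; omega
  | zero => omega
  | add a b _ _ ha hb => omega

theorem mem_closure_of_frobNum_le (hcof : ∃ N₀, ∀ k, N₀ ≤ k → k ∈ AddSubmonoid.closure L)
    {k : ℕ} (hk : frobNum L ≤ k) : k ∈ AddSubmonoid.closure L :=
  Nat.sInf_mem hcof k hk

theorem frobNum_sub_one_notMem (hcof : ∃ N₀, ∀ k, N₀ ≤ k → k ∈ AddSubmonoid.closure L)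
    (h1 : 1 ∉ AddSubmonoid.closure L) : frobNum L - 1 ∉ AddSubmonoid.closure L := by
  intro hF
  have hF0 : frobNum L ≠ 0 := fun h0 => h1 (mem_closure_of_frobNum_le hcof (by omega))
  have : frobNum L ≤ frobNum L - 1 := Nat.sInf_le fun k hk => by
    rcases hk.eq_or_lt with rfl | hlt
    · exact hF
    · exact mem_closure_of_frobNum_le hcof (by omega)
  omega

end Frobenius

section Companion

variable {n : ℕ}

/-- For a companion matrix with last row `N`, a one in column `c` of that row closes the
elementary cycle `N → c → c + 1 → ⋯ → N` of length `n - c`. -/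
def lastRowCycleLengths (A : Matrix (Fin n) (Fin n) ℝ) (N : Fin n) : Set ℕ :=
  {k | ∃ c : Fin n, A N c = 1 ∧ n - (c : ℕ) = k}

/-- The set `V₁` of the paper, with columns indexed from `0`. -/
def lastRowZeros (A : Matrix (Fin n) (Fin n) ℝ) (N : Fin n) : Set ℕ :=
  {m | ∃ i : Fin n, (i : ℕ) = m ∧ A N i = 0}

theorem two_le_of_mem_lastRowCycleLengths {A : Matrix (Fin n) (Fin n) ℝ} {N : Fin n}
    (hN : (N : ℕ) = n - 1) (htr : A N N = 0) : ∀ k ∈ lastRowCycleLengths A N, 2 ≤ k := by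
  rintro k ⟨c, hc, rfl⟩
  have hcN : c ≠ N := by rintro rfl; simp [htr] at hc
  have : (c : ℕ) ≠ N := fun h => hcN (Fin.ext h)
  omega

theorem lastRowZeros_subset_Ico {A : Matrix (Fin n) (Fin n) ℝ} {N : Fin n}
    (h0 : A N ⟨0, N.pos⟩ = 1) : lastRowZeros A N ⊆ Set.Ico 1 n := by
  rintro m ⟨i, rfl, hi⟩
  refine ⟨Nat.one_le_iff_ne_zero.2 fun hi0 => ?_, i.isLt⟩
  rw [show i = ⟨0, N.pos⟩ from Fin.ext hi0, h0] at hi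
  exact one_ne_zero hi

namespace IsCompanion

variable {A : Matrix (Fin n) (Fin n) ℝ} {N : Fin n}

theorem nonneg (hA : IsCompanion A) (i j : Fin n) : 0 ≤ A i j := by
  rcases hA.1 i j with h | h <;> simp [h]

theorem pos_iff (hA : IsCompanion A) {i j : Fin n} : 0 < A i j ↔ A i j = 1 := by
  rcases hA.1 i j with h | h <;> simp [h]

theorem val_eq_succ_of_ne_last (hA : IsCompanion A) (hN : (N : ℕ) = n - 1) {i j : Fin n}
    (hij : A i j = 1) (hi : i ≠ N) : (j : ℕ) = i + 1 := by
  have : (i : ℕ) ≠ N := fun h => hi (Fin.ext h)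
  exact (hA.2 i j (by omega)).1 hij

theorem exists_pos_col (hA : IsCompanion A) (h0 : A N ⟨0, N.pos⟩ = 1) (j : Fin n) :
    ∃ i, 0 < A i j := by
  rcases Nat.eq_zero_or_pos (j : ℕ) with hj | hj
  · exact ⟨N, by rw [show j = ⟨0, N.pos⟩ from Fin.ext hj, h0]; exact one_pos⟩
  · exact ⟨⟨j - 1, by omega⟩, hA.pos_iff.2 ((hA.2 _ _ (by simp; omega)).2 (by simp; omega))⟩

/-- A walk of length `l` from `i` either climbs straight to `i + l`, or reaches `N` after
`n - 1 - i` steps and continues from there. -/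
theorem pow_apply_pos_iff (hA : IsCompanion A) (hN : (N : ℕ) = n - 1) {l : ℕ} {i j : Fin n} :
    0 < (A ^ l) i j ↔ (i : ℕ) + l = j ∨ (n - 1 - i < l ∧ 0 < (A ^ (l - (n - 1 - i))) N j) := by
  induction l generalizing i with
  | zero => simp [one_apply_pos_iff, Fin.ext_iff]
  | succ l ih =>
    have hi := i.isLt
    have hj := j.isLt
    by_cases hiN : i = N
    · subst i
      rw [show l + 1 - (n - 1 - N) = l + 1 by omega]
      constructor
      · exact fun h => Or.inr ⟨by omega, h⟩
      · rintro (h | ⟨_, h⟩)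
        · omega
        · exact h
    · have hiN' : (i : ℕ) + 1 < n := by
        have : (i : ℕ) ≠ N := fun h => hiN (Fin.ext h)
        omega
      have hstep : ∀ t, 0 < A i t ↔ t = ⟨i + 1, hiN'⟩ := fun t => by
        rw [hA.pos_iff, hA.2 i t hiN', Fin.ext_iff]
      simp only [pow_succ_apply_pos_iff hA.nonneg, hstep, exists_eq_left, ih]
      rw [show l + 1 - (n - 1 - i) = l - (n - 1 - (i + 1)) by omega]
      exact or_congr (by omega) (and_congr_left' (by omega))

theorem pow_succ_last_apply_pos_iff (hA : IsCompanion A) (hN : (N : ℕ) = n - 1) {l : ℕ}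
    {j : Fin n} : 0 < (A ^ (l + 1)) N j ↔ ∃ c : Fin n, A N c = 1 ∧
      ((c : ℕ) + l = j ∨ (n - 1 - c < l ∧ 0 < (A ^ (l - (n - 1 - c))) N j)) := by
  rw [pow_succ_apply_pos_iff hA.nonneg]
  exact exists_congr fun c => and_congr hA.pos_iff (hA.pow_apply_pos_iff hN)

theorem pow_last_last_pos_of_mem_closure (hA : IsCompanion A) (hN : (N : ℕ) = n - 1) {l : ℕ}
    (hl : l ∈ AddSubmonoid.closure (lastRowCycleLengths A N)) : 0 < (A ^ l) N N := by
  induction hl using AddSubmonoid.closure_induction with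
  | mem k hk =>
    obtain ⟨c, hc, rfl⟩ := hk
    have := c.isLt
    rw [show n - (c : ℕ) = (n - 1 - c) + 1 by omega, hA.pow_succ_last_apply_pos_iff hN]
    exact ⟨c, hc, Or.inl (by omega)⟩
  | zero => simp
  | add a b _ _ ha hb => exact (pow_add_apply_pos_iff hA.nonneg).2 ⟨N, ha, hb⟩

/-- A walk from `N` ends with its last departure `N → c → c + 1 → ⋯ → j`. -/
theorem pow_last_apply_pos_iff (hA : IsCompanion A) (hN : (N : ℕ) = n - 1) {l : ℕ} (hl : 0 < l)
    {j : Fin n} : 0 < (A ^ l) N j ↔ ∃ c s, A N c = 1 ∧ c ≤ j ∧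
      s ∈ AddSubmonoid.closure (lastRowCycleLengths A N) ∧ l = s + (j + 1 - c) := by
  constructor
  · induction l using Nat.strong_induction_on with
    | _ l ih =>
      obtain ⟨l, rfl⟩ : ∃ l', l = l' + 1 := ⟨l - 1, by omega⟩
      rw [hA.pow_succ_last_apply_pos_iff hN]
      rintro ⟨c, hc, hcj | ⟨hlt, hpos⟩⟩
      · exact ⟨c, 0, hc, by rw [Fin.le_def]; omega, zero_mem _, by omega⟩
      · obtain ⟨c', s, hc', hcj, hs, hl'⟩ := ih _ (by omega) (by omega) hpos
        have := c.isLt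
        exact ⟨c', s + (n - c), hc', hcj,
          add_mem hs (AddSubmonoid.subset_closure ⟨c, hc, rfl⟩), by omega⟩
  · rintro ⟨c, s, hc, hcj, hs, rfl⟩
    rw [Fin.le_def] at hcj
    rw [pow_add_apply_pos_iff hA.nonneg]
    refine ⟨N, hA.pow_last_last_pos_of_mem_closure hN hs, ?_⟩
    rw [show (j : ℕ) + 1 - c = (j - c) + 1 by omega, hA.pow_succ_last_apply_pos_iff hN]
    exact ⟨c, hc, Or.inl (by omega)⟩

theorem mem_closure_of_pow_last_last_pos (hA : IsCompanion A) (hN : (N : ℕ) = n - 1) {l : ℕ}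
    (h : 0 < (A ^ l) N N) : l ∈ AddSubmonoid.closure (lastRowCycleLengths A N) := by
  rcases Nat.eq_zero_or_pos l with rfl | hl
  · exact zero_mem _
  obtain ⟨c, s, hc, -, hs, rfl⟩ := (hA.pow_last_apply_pos_iff hN hl).1 h
  rw [hN, show n - 1 + 1 - c = n - c by omega]
  exact add_mem hs (AddSubmonoid.subset_closure ⟨c, hc, rfl⟩)

theorem exists_forall_ge_mem_closure (hA : IsCompanion A) (hN : (N : ℕ) = n - 1)
    (h0 : A N ⟨0, N.pos⟩ = 1) (hP : _root_.IsPrimitive A) :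
    ∃ N₀, ∀ k, N₀ ≤ k → k ∈ AddSubmonoid.closure (lastRowCycleLengths A N) := by
  obtain ⟨m, -, hm⟩ := hP
  exact exists_forall_ge_mem_closure_of_succ_mem (hA.mem_closure_of_pow_last_last_pos hN (hm N N))
    (hA.mem_closure_of_pow_last_last_pos hN
      (pow_succ_pos_of_pos hA.nonneg (hA.exists_pos_col h0) hm N N))

theorem val_add_of_ne_last (hA : IsCompanion A) (hN : (N : ℕ) = n - 1) {c : ℕ → Fin n}
    {a s : ℕ} (hc : ∀ t, a ≤ t → t < a + s → A (c t) (c (t + 1)) = 1)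
    (hne : ∀ t, a ≤ t → t < a + s → c t ≠ N) : (c (a + s) : ℕ) = c a + s := by
  induction s with
  | zero => rfl
  | succ s ih =>
    have hstep := hA.val_eq_succ_of_ne_last hN (hc (a + s) (by omega) (by omega))
      (hne (a + s) (by omega) (by omega))
    rw [← add_assoc, hstep, ih (fun t h1 _ => hc t h1 (by omega)) fun t h1 _ => hne t h1 (by omega)]
    omega

/-- An elementary cycle must pass through `N`, and climbs deterministically on both sides. -/
theorem mem_lastRowCycleLengths_of_hasElemCycle (hA : IsCompanion A) (hN : (N : ℕ) = n - 1)
    {k : ℕ} (h : HasElemCycle A k) : k ∈ lastRowCycleLengths A N := by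
  obtain ⟨hk, c, hck, hinj, hc⟩ := h
  obtain ⟨i₀, hi₀, hcN⟩ : ∃ i₀ < k, c i₀ = N := by
    by_contra! hne
    have := hA.val_add_of_ne_last hN (a := 0) (s := k) (fun t _ ht => hc t (by omega))
      fun t _ ht => hne t (by omega)
    rw [zero_add, hck] at this
    omega
  have hne : ∀ t < k, t ≠ i₀ → c t ≠ N := fun t ht hti h =>
    hti (hinj t i₀ ht hi₀ (h.trans hcN.symm))
  have hbefore := hA.val_add_of_ne_last hN (a := 0) (s := i₀) (fun t _ ht => hc t (by omega))
    fun t _ ht => hne t (by omega) (by omega)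
  have hafter := hA.val_add_of_ne_last hN (a := i₀ + 1) (s := k - i₀ - 1)
    (fun t _ ht => hc t (by omega)) fun t h1 ht => hne t (by omega) (by omega)
  rw [zero_add, hcN] at hbefore
  rw [show i₀ + 1 + (k - i₀ - 1) = k by omega, hck] at hafter
  refine ⟨c (i₀ + 1), hcN ▸ hc i₀ hi₀, ?_⟩
  omega

theorem hasElemCycle_of_mem_lastRowCycleLengths (hA : IsCompanion A) (hN : (N : ℕ) = n - 1)
    {k : ℕ} (h : k ∈ lastRowCycleLengths A N) : HasElemCycle A k := by
  obtain ⟨b, hb, rfl⟩ := h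
  have := b.isLt
  refine ⟨by omega, fun t => if t = 0 then N else ⟨min (b + t - 1) (n - 1), by omega⟩,
    by simp [Fin.ext_iff, hN], ?_, ?_⟩
  · intro i j hi hj hij
    by_cases hi0 : i = 0 <;> by_cases hj0 : j = 0 <;>
      simp [hi0, hj0, Fin.ext_iff, hN] at hij <;> omega
  · intro t ht
    by_cases ht0 : t = 0
    · subst ht0
      simp only [if_true, Nat.add_one_ne_zero, if_false]
      convert hb using 2
      simp only [Fin.ext_iff]
      omega
    · simp only [ht0, if_false, Nat.add_one_ne_zero]
      exact (hA.2 _ _ (by simp; omega)).2 (by simp; omega)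

theorem hasElemCycle_iff (hA : IsCompanion A) (hN : (N : ℕ) = n - 1) {k : ℕ} :
    HasElemCycle A k ↔ k ∈ lastRowCycleLengths A N :=
  ⟨hA.mem_lastRowCycleLengths_of_hasElemCycle hN, hA.hasElemCycle_of_mem_lastRowCycleLengths hN⟩

theorem exists_le_sub_le_runMax (hA : IsCompanion A) (h0 : A N ⟨0, N.pos⟩ = 1) (j : Fin n) :
    ∃ c : Fin n, A N c = 1 ∧ c ≤ j ∧ (j : ℕ) - c ≤ runMax (lastRowZeros A N) := by
  have hV := lastRowZeros_subset_Ico h0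
  obtain ⟨c, hcj, hcV, hc⟩ := exists_le_notMem_sub_le_runMax
    (bddAbove_Ico.mono hV) (fun h => by simpa using hV h) j
  have := j.isLt
  exact ⟨⟨c, by omega⟩, (hA.1 N _).resolve_left fun h => hcV ⟨_, rfl, h⟩, hcj, hc⟩

theorem pow_apply_pos_of_forall_ge_mem_closure (hA : IsCompanion A) (hN : (N : ℕ) = n - 1)
    {F r : ℕ} (hF : ∀ k, F ≤ k → k ∈ AddSubmonoid.closure (lastRowCycleLengths A N))
    (hgap : ∀ j : Fin n, ∃ c : Fin n, A N c = 1 ∧ c ≤ j ∧ (j : ℕ) - c ≤ r) (i j : Fin n) :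
    0 < (A ^ (n + F + r)) i j := by
  have := i.isLt
  have := j.isLt
  obtain ⟨c, hc, hcj, hjc⟩ := hgap j
  rw [Fin.le_def] at hcj
  refine (hA.pow_apply_pos_iff hN).2 (Or.inr ⟨by omega, ?_⟩)
  exact (hA.pow_last_apply_pos_iff hN (by omega)).2
    ⟨c, F + r + i - (j - c), hc, hcj, hF _ (by omega), by omega⟩

theorem not_pow_apply_pos_of_notMem_closure (hA : IsCompanion A) (hN : (N : ℕ) = n - 1) {s : ℕ}
    (hs : s ∉ AddSubmonoid.closure (lastRowCycleLengths A N)) {i j : Fin n}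
    (hj : ∀ c : Fin n, A N c = 1 → c ≤ j → (c : ℕ) = 0) : ¬ 0 < (A ^ (n - i + s + j)) i j := by
  have := i.isLt
  rw [hA.pow_apply_pos_iff hN]
  rintro (h | ⟨-, h⟩)
  · omega
  obtain ⟨c, s', hc, hcj, hs', hl⟩ := (hA.pow_last_apply_pos_iff hN (by omega)).1 h
  have hc0 := hj c hc hcj
  rw [show s = s' by omega] at hs
  exact hs hs'

end IsCompanion

end Companion

theorem stmt15 {n : ℕ} (hn : 3 ≤ n) (A : Matrix (Fin n) (Fin n) ℝ)
    (hA : IsCompanion A) (hP : _root_.IsPrimitive A)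
    (h1 : A ⟨n - 1, by omega⟩ ⟨0, by omega⟩ = 1)
    (htr : A ⟨n - 1, by omega⟩ ⟨n - 1, by omega⟩ = 0)
    (hint : ∀ i : Fin n, 1 ≤ (i : ℕ) →
      (i : ℕ) ≤ runMax {m : ℕ | ∃ i' : Fin n, (i' : ℕ) = m ∧ A ⟨n - 1, by omega⟩ i' = 0} →
      A ⟨n - 1, by omega⟩ i = 0) :
    matExp A = n + frobNum {k : ℕ | HasElemCycle A k} +
      runMax {m : ℕ | ∃ i' : Fin n, (i' : ℕ) = m ∧ A ⟨n - 1, by omega⟩ i' = 0} := by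
  set N : Fin n := ⟨n - 1, by omega⟩
  have hN : (N : ℕ) = n - 1 := rfl
  change ∀ i : Fin n, 1 ≤ (i : ℕ) → (i : ℕ) ≤ runMax (lastRowZeros A N) → A N i = 0 at hint
  change matExp A = n + frobNum {k : ℕ | HasElemCycle A k} + runMax (lastRowZeros A N)
  rw [show {k : ℕ | HasElemCycle A k} = lastRowCycleLengths A N from
    Set.ext fun k => hA.hasElemCycle_iff hN]
  set F := frobNum (lastRowCycleLengths A N)
  set r := runMax (lastRowZeros A N)
  have hcof := hA.exists_forall_ge_mem_closure hN h1 hP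
  have hgap : F - 1 ∉ AddSubmonoid.closure (lastRowCycleLengths A N) :=
    frobNum_sub_one_notMem hcof (one_notMem_closure (two_le_of_mem_lastRowCycleLengths hN htr))
  have hF : 1 ≤ F := Nat.one_le_iff_ne_zero.2 fun h => hgap (by simp [h])
  have hr : r < n := by have := runMax_le (lastRowZeros_subset_Ico h1); omega
  have hzero := hA.not_pow_apply_pos_of_notMem_closure hN hgap (i := ⟨0, by omega⟩)
    (j := ⟨r, hr⟩) fun c hc hcr => by_contra fun hc0 => by simp [hint c (by omega) hcr] at hc
  rw [show n - 0 + (F - 1) + r = n + F + r - 1 by omega] at hzero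
  exact matExp_eq_of_pos_of_not_pos hA.nonneg (hA.exists_pos_col h1) (by omega)
    (hA.pow_apply_pos_of_forall_ge_mem_closure hN (fun _ => mem_closure_of_frobNum_le hcof)
      (hA.exists_le_sub_le_runMax h1)) hzero
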